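/- arXiv:1808.00445 — 2 statements merged into one kernel-verified Lean document; each statement's English description precedes it below -/
import Mathlib

section
/- A perfect matching M on {1,...,2n} with at least one crossing pair a<b<c<d (a∼c, b∼d in M) satisfies Δ_M = Δ_{M'} + Δ_{M''}, where M' replaces the pairs {a,c},{b,d} by {a,b},{c,d} and M'' replaces them by {a,d},{b,c}, and both M' and M'' have strictly fewer crossing pairs than M. -/
open MvPolynomial Finset

noncomputable section

/-- The polynomial ring ℂ[x_{ij}] for a 2 × (2n) matrix of indeterminates. -/
abbrev PolyR (n : ℕ) := MvPolynomial (Fin 2 × Fin (2 * n)) ℂ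

/-- The 2×2 minor Δ_{ab} = x_{1a} x_{2b} - x_{1b} x_{2a} (rows 0,1 in 0-indexing). -/
def Delta {n : ℕ} (a b : Fin (2 * n)) : PolyR n :=
  X (0, a) * X (1, b) - X (0, b) * X (1, a)

/-- A perfect matching on {1,…,2n}, encoded as a fixed-point-free involution. -/
structure PM (n : ℕ) where
  f : Fin (2 * n) → Fin (2 * n)
  invol : ∀ i, f (f i) = i
  nofix : ∀ i, f i ≠ i

/-- The product Δ_M of the minors over the blocks of a perfect matching M. -/
def DeltaM {n : ℕ} (M : PM n) : PolyR n :=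
  ∏ i ∈ Finset.univ.filter (fun i => i < M.f i), Delta i (M.f i)

/-- M is noncrossing: no a < b < c < d with a ∼ c and b ∼ d. -/
def Noncrossing {n : ℕ} (M : PM n) : Prop :=
  ¬ ∃ a b c d : Fin (2 * n), a < b ∧ b < c ∧ c < d ∧ M.f a = c ∧ M.f b = d

/-- The number of crossing pairs a < b < c < d with a ∼ c, b ∼ d in M. -/
def crossings {n : ℕ} (M : PM n) : ℕ :=
  ((Finset.univ : Finset (Fin (2 * n) × Fin (2 * n))).filter
    (fun p => p.1 < p.2 ∧ p.2 < M.f p.1 ∧ M.f p.1 < M.f p.2)).card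

/-!
The syzygy is the three-term Plücker relation `Δ_ac Δ_bd = Δ_ab Δ_cd + Δ_ad Δ_bc`, multiplied by
the minors of the blocks that are left alone. Both resolutions are relabellings of `M`, by the
transpositions `(b c)` and `(c d)`.

For the crossing count, sort the crossing pairs by which of their points lie in `{a, b, c, d}`.
Pairs of untouched blocks do not change, and the crossing of `{a, c}` with `{b, d}` disappears.
An untouched block `{x, y}` crosses a block `{s, t}` iff exactly one of `s`, `t` lies in the
interval `(x, y)`; as this interval meets `a < b < c < d` in consecutive points, it crosses the
new blocks at most as often as `{a, c}` and `{b, d}`.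
-/

lemma Delta_mul_Delta_eq_add {n : ℕ} (a b c d : Fin (2 * n)) :
    Delta a c * Delta b d = Delta a b * Delta c d + Delta a d * Delta b c := by
  unfold Delta
  ring

section LinearOrder

variable {α : Type*} [LinearOrder α]

def xorIndicator (I : Set α) [DecidablePred (· ∈ I)] (s t : α) : ℕ :=
  if Xor (s ∈ I) (t ∈ I) then 1 else 0

/-- For `x < y`, the left side counts the crossings of the chords `{s, t}` and `{x, y}`. -/
lemma ite_add_ite_eq_xorIndicator_Ioo {x y s t : α} (hst : s < t) (hxs : x ≠ s)
    (hyt : y ≠ t) :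
    ((if s < x ∧ x < t ∧ t < y then 1 else 0) + if x < s ∧ s < y ∧ y < t then 1 else 0) =
      xorIndicator (Set.Ioo x y) s t := by
  simp only [xorIndicator, Set.mem_Ioo, Xor]
  split_ifs <;> grind

/-- An order-connected set meets `a < b < c < d` in consecutive points. -/
lemma xorIndicator_add_le_of_ordConnected {I : Set α} [DecidablePred (· ∈ I)]
    (hI : I.OrdConnected) {a b c d : α} (hab : a < b) (hbc : b < c) (hcd : c < d) :
    xorIndicator I a b + xorIndicator I c d ≤ xorIndicator I a c + xorIndicator I b d ∧
      xorIndicator I a d + xorIndicator I b c ≤ xorIndicator I a c + xorIndicator I b d := by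
  have hac : a ∈ I → c ∈ I → b ∈ I := fun ha hc => hI.out ha hc ⟨hab.le, hbc.le⟩
  have hbd : b ∈ I → d ∈ I → c ∈ I := fun hb hd => hI.out hb hd ⟨hbc.le, hcd.le⟩
  have had : a ∈ I → d ∈ I → b ∈ I := fun ha hd => hI.out ha hd ⟨hab.le, (hbc.trans hcd).le⟩
  by_cases a ∈ I <;> by_cases b ∈ I <;> by_cases c ∈ I <;> by_cases d ∈ I <;>
    simp_all [xorIndicator, Xor]

end LinearOrder

namespace PM

variable {n : ℕ}

lemma apply_eq_comm (M : PM n) {i j : Fin (2 * n)} : M.f i = j ↔ M.f j = i :=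
  ⟨fun h => h ▸ M.invol i, fun h => h ▸ M.invol j⟩

def conj (M : PM n) (σ : Equiv.Perm (Fin (2 * n))) : PM n where
  f i := σ (M.f (σ.symm i))
  invol i := by simp [M.invol]
  nofix i h := M.nofix (σ.symm i) (σ.injective (by rw [h, Equiv.apply_symm_apply]))

lemma conj_apply_of_apply_eq (M : PM n) {σ : Equiv.Perm (Fin (2 * n))} {i j : Fin (2 * n)}
    (h : σ i = j) : (M.conj σ).f j = σ (M.f i) := by
  simp [conj, ← h]

/-- Swapping the labels `q` and `r` turns the blocks `{p, r}`, `{q, s}` into `{p, q}`, `{r, s}`. -/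
lemma exists_rematch (M : PM n) {p q r s : Fin (2 * n)} (hpq : p ≠ q) (hrs : r ≠ s)
    (hp : M.f p = r) (hq : M.f q = s) :
    ∃ N : PM n, N.f p = q ∧ N.f r = s ∧
      ∀ k, k ≠ p → k ≠ q → k ≠ r → k ≠ s → N.f k = M.f k := by
  have hpr : p ≠ r := fun h => M.nofix p (hp.trans h.symm)
  have hqs : q ≠ s := fun h => M.nofix q (hq.trans h.symm)
  refine ⟨M.conj (Equiv.swap q r), ?_, ?_, fun k hkp hkq hkr hks => ?_⟩
  · rw [conj_apply_of_apply_eq M (Equiv.swap_apply_of_ne_of_ne hpq hpr), hp,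
      Equiv.swap_apply_right]
  · rw [conj_apply_of_apply_eq M (Equiv.swap_apply_left q r), hq,
      Equiv.swap_apply_of_ne_of_ne hqs.symm hrs.symm]
  · have hfq : M.f k ≠ q := fun h => hks (hq ▸ M.apply_eq_comm.1 h).symm
    have hfr : M.f k ≠ r := fun h =>
      hkp ((M.apply_eq_comm.1 hp).symm.trans (M.apply_eq_comm.1 h)).symm
    rw [conj_apply_of_apply_eq M (Equiv.swap_apply_of_ne_of_ne hkq hkr),
      Equiv.swap_apply_of_ne_of_ne hfq hfr]

def blockMinor (M : PM n) (i : Fin (2 * n)) : PolyR n :=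
  if i < M.f i then Delta i (M.f i) else 1

lemma DeltaM_eq_prod_blockMinor (M : PM n) : DeltaM M = ∏ i, M.blockMinor i :=
  Finset.prod_filter _ _

lemma blockMinor_of_lt {M : PM n} {i j : Fin (2 * n)} (h : M.f i = j) (hij : i < j) :
    M.blockMinor i = Delta i j := by
  simp [blockMinor, h, hij]

lemma blockMinor_of_gt {M : PM n} {i j : Fin (2 * n)} (h : M.f i = j) (hji : j < i) :
    M.blockMinor i = 1 := by
  simp [blockMinor, h, hji.not_gt]

lemma DeltaM_eq_add_of_eqOn_compl {M M' M'' : PM n} (S : Finset (Fin (2 * n)))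
    (h' : ∀ k ∉ S, M'.f k = M.f k) (h'' : ∀ k ∉ S, M''.f k = M.f k)
    (hS : ∏ i ∈ S, M.blockMinor i = ∏ i ∈ S, M'.blockMinor i + ∏ i ∈ S, M''.blockMinor i) :
    DeltaM M = DeltaM M' + DeltaM M'' := by
  have hcompl : ∀ N : PM n, (∀ k ∉ S, N.f k = M.f k) →
      ∏ i ∈ Sᶜ, N.blockMinor i = ∏ i ∈ Sᶜ, M.blockMinor i := fun N hN =>
    Finset.prod_congr rfl fun k hk => by rw [blockMinor, blockMinor, hN k (Finset.mem_compl.1 hk)]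
  simp only [DeltaM_eq_prod_blockMinor, ← Finset.prod_mul_prod_compl S, hS, hcompl M' h',
    hcompl M'' h'', add_mul]

lemma DeltaM_eq_add_of_resolve {M M' M'' : PM n} {a b c d : Fin (2 * n)}
    (hab : a < b) (hbc : b < c) (hcd : c < d) (hac : M.f a = c) (hbd : M.f b = d)
    (h'a : M'.f a = b) (h'c : M'.f c = d) (h''a : M''.f a = d) (h''b : M''.f b = c)
    (h' : ∀ k ∉ ({a, b, c, d} : Finset _), M'.f k = M.f k)
    (h'' : ∀ k ∉ ({a, b, c, d} : Finset _), M''.f k = M.f k) :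
    DeltaM M = DeltaM M' + DeltaM M'' := by
  refine DeltaM_eq_add_of_eqOn_compl _ h' h'' ?_
  have hprod : ∀ N : PM n, ∏ i ∈ {a, b, c, d}, N.blockMinor i =
      N.blockMinor a * N.blockMinor b * N.blockMinor c * N.blockMinor d := by
    intro N
    simp [hab.ne, hbc.ne, hcd.ne, (hab.trans hbc).ne, (hbc.trans hcd).ne,
      (hab.trans (hbc.trans hcd)).ne, mul_assoc]
  rw [hprod, hprod, hprod,
    blockMinor_of_lt hac (hab.trans hbc), blockMinor_of_lt hbd (hbc.trans hcd),
    blockMinor_of_gt (M.apply_eq_comm.1 hac) (hab.trans hbc),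
    blockMinor_of_gt (M.apply_eq_comm.1 hbd) (hbc.trans hcd),
    blockMinor_of_lt h'a hab, blockMinor_of_gt (M'.apply_eq_comm.1 h'a) hab,
    blockMinor_of_lt h'c hcd, blockMinor_of_gt (M'.apply_eq_comm.1 h'c) hcd,
    blockMinor_of_lt h''a (hab.trans (hbc.trans hcd)), blockMinor_of_lt h''b hbc,
    blockMinor_of_gt (M''.apply_eq_comm.1 h''b) hbc,
    blockMinor_of_gt (M''.apply_eq_comm.1 h''a) (hab.trans (hbc.trans hcd))]
  linear_combination Delta_mul_Delta_eq_add a b c d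

def crossIndicator (M : PM n) (i j : Fin (2 * n)) : ℕ :=
  if i < j ∧ j < M.f i ∧ M.f i < M.f j then 1 else 0

lemma crossings_eq_sum (M : PM n) : crossings M = ∑ i, ∑ j, M.crossIndicator i j := by
  rw [crossings, Finset.card_filter, Fintype.sum_prod_type]
  rfl

lemma crossings_eq_add (M : PM n) (S : Finset (Fin (2 * n))) :
    crossings M = ∑ i ∈ S, ∑ j ∈ S, M.crossIndicator i j +
      ∑ k ∈ Sᶜ, ∑ s ∈ S, (M.crossIndicator s k + M.crossIndicator k s) +
      ∑ i ∈ Sᶜ, ∑ j ∈ Sᶜ, M.crossIndicator i j := by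
  simp only [crossings_eq_sum, ← Finset.sum_add_sum_compl S, Finset.sum_add_distrib]
  rw [Finset.sum_comm (s := S) (t := Sᶜ)]
  ring

lemma crossIndicator_self (M : PM n) (i : Fin (2 * n)) : M.crossIndicator i i = 0 := by
  simp [crossIndicator]

lemma crossIndicator_eq_zero_of_left {M : PM n} {i : Fin (2 * n)} (hi : M.f i < i)
    (j : Fin (2 * n)) : M.crossIndicator i j = 0 := by
  simp only [crossIndicator, ite_eq_right_iff]
  exact fun h => absurd (h.1.trans h.2.1) hi.not_gt

lemma crossIndicator_eq_zero_of_right {M : PM n} {j : Fin (2 * n)} (hj : M.f j < j)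
    (i : Fin (2 * n)) : M.crossIndicator i j = 0 := by
  simp only [crossIndicator, ite_eq_right_iff]
  exact fun h => absurd ((h.2.2.trans hj).trans h.2.1) (lt_irrefl _)

lemma crossIndicator_add_crossIndicator {M : PM n} {s t x : Fin (2 * n)} (hs : M.f s = t)
    (hst : s < t) (hxs : x ≠ s) :
    M.crossIndicator s x + M.crossIndicator x s = xorIndicator (Set.Ioo x (M.f x)) s t := by
  have hyt : M.f x ≠ t := fun h =>
    hxs ((M.apply_eq_comm.1 h).symm.trans (M.apply_eq_comm.1 hs))
  simp only [crossIndicator, hs]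
  exact ite_add_ite_eq_xorIndicator_Ioo hst hxs hyt

lemma crossings_lt_of_eqOn_compl {M N : PM n} (S : Finset (Fin (2 * n)))
    (hNM : ∀ k ∉ S, N.f k = M.f k)
    (hS : ∑ i ∈ S, ∑ j ∈ S, N.crossIndicator i j < ∑ i ∈ S, ∑ j ∈ S, M.crossIndicator i j)
    (hSc : ∀ k ∉ S, ∑ s ∈ S, (N.crossIndicator s k + N.crossIndicator k s) ≤
      ∑ s ∈ S, (M.crossIndicator s k + M.crossIndicator k s)) :
    crossings N < crossings M := by
  have hcompl : ∑ i ∈ Sᶜ, ∑ j ∈ Sᶜ, N.crossIndicator i j =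
      ∑ i ∈ Sᶜ, ∑ j ∈ Sᶜ, M.crossIndicator i j :=
    Finset.sum_congr rfl fun i hi => Finset.sum_congr rfl fun j hj => by
      rw [crossIndicator, crossIndicator, hNM i (Finset.mem_compl.1 hi),
        hNM j (Finset.mem_compl.1 hj)]
  have hmixed := Finset.sum_le_sum fun k hk => hSc k (Finset.mem_compl.1 hk)
  rw [crossings_eq_add N S, crossings_eq_add M S, hcompl]
  omega

lemma sum_sum_crossIndicator_of_two_blocks {N : PM n} {p q r s : Fin (2 * n)}
    (hpq : p < q) (hrs : r < s) (hp : N.f p = q) (hr : N.f r = s)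
    (hpr : p ≠ r) (hps : p ≠ s) (hqr : q ≠ r) (hqs : q ≠ s) :
    ∑ i ∈ {p, q, r, s}, ∑ j ∈ {p, q, r, s}, N.crossIndicator i j =
      xorIndicator (Set.Ioo r s) p q := by
  have hq := crossIndicator_eq_zero_of_left ((N.apply_eq_comm.1 hp).trans_lt hpq)
  have hs := crossIndicator_eq_zero_of_left ((N.apply_eq_comm.1 hr).trans_lt hrs)
  have hq' := crossIndicator_eq_zero_of_right ((N.apply_eq_comm.1 hp).trans_lt hpq)
  have hs' := crossIndicator_eq_zero_of_right ((N.apply_eq_comm.1 hr).trans_lt hrs)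
  simp only [Finset.sum_insert, Finset.mem_insert, Finset.mem_singleton, hpq.ne, hpr, hps, hqr,
    hqs, hrs.ne, not_false_eq_true, or_self, Finset.sum_singleton, hq, hs, hq', hs',
    crossIndicator_self, add_zero, zero_add]
  rw [← hr]
  exact crossIndicator_add_crossIndicator hp hpq hpr.symm

lemma sum_crossIndicator_add_of_two_blocks {N : PM n} {p q r s k : Fin (2 * n)}
    (hpq : p < q) (hrs : r < s) (hp : N.f p = q) (hr : N.f r = s)
    (hpr : p ≠ r) (hps : p ≠ s) (hqr : q ≠ r) (hqs : q ≠ s) (hk : k ∉ ({p, q, r, s} : Finset _)) :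
    ∑ t ∈ {p, q, r, s}, (N.crossIndicator t k + N.crossIndicator k t) =
      xorIndicator (Set.Ioo k (N.f k)) p q + xorIndicator (Set.Ioo k (N.f k)) r s := by
  have hq := crossIndicator_eq_zero_of_left ((N.apply_eq_comm.1 hp).trans_lt hpq)
  have hs := crossIndicator_eq_zero_of_left ((N.apply_eq_comm.1 hr).trans_lt hrs)
  have hq' := crossIndicator_eq_zero_of_right ((N.apply_eq_comm.1 hp).trans_lt hpq)
  have hs' := crossIndicator_eq_zero_of_right ((N.apply_eq_comm.1 hr).trans_lt hrs)
  simp only [Finset.mem_insert, Finset.mem_singleton, not_or] at hk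
  simp only [Finset.sum_insert, Finset.mem_insert, Finset.mem_singleton, hpq.ne, hpr, hps, hqr,
    hqs, hrs.ne, not_false_eq_true, or_self, Finset.sum_singleton, hq, hs, hq', hs',
    add_zero, zero_add, crossIndicator_add_crossIndicator hp hpq hk.1,
    crossIndicator_add_crossIndicator hr hrs hk.2.2.1]

lemma crossings_lt_of_rematch {M N : PM n} {a b c d p q r s : Fin (2 * n)}
    (hab : a < b) (hbc : b < c) (hcd : c < d) (hac : M.f a = c) (hbd : M.f b = d)
    (hpq : p < q) (hrs : r < s) (hp : N.f p = q) (hr : N.f r = s)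
    (hpr : p ≠ r) (hps : p ≠ s) (hqr : q ≠ r) (hqs : q ≠ s)
    (hS : ({p, q, r, s} : Finset _) = {a, b, c, d})
    (hNM : ∀ k ∉ ({a, b, c, d} : Finset _), N.f k = M.f k)
    (hnoncross : xorIndicator (Set.Ioo r s) p q = 0)
    (hsep : ∀ x y : Fin (2 * n),
      xorIndicator (Set.Ioo x y) p q + xorIndicator (Set.Ioo x y) r s ≤
        xorIndicator (Set.Ioo x y) a c + xorIndicator (Set.Ioo x y) b d) :
    crossings N < crossings M := by
  have hSM : ({a, c, b, d} : Finset _) = {a, b, c, d} := by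
    rw [Finset.insert_comm c b]
  have had : a ≠ d := (hab.trans (hbc.trans hcd)).ne
  refine crossings_lt_of_eqOn_compl _ hNM ?_ fun k hk => ?_
  · rw [← hS, sum_sum_crossIndicator_of_two_blocks hpq hrs hp hr hpr hps hqr hqs, hnoncross, hS,
      ← hSM, sum_sum_crossIndicator_of_two_blocks (hab.trans hbc) (hbc.trans hcd) hac hbd
        hab.ne had hbc.ne' hcd.ne]
    simp [xorIndicator, hbc, hcd, hab.not_gt]
  · rw [← hS] at hk
    rw [← hS, sum_crossIndicator_add_of_two_blocks hpq hrs hp hr hpr hps hqr hqs hk, hS, ← hSM,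
      sum_crossIndicator_add_of_two_blocks (hab.trans hbc) (hbc.trans hcd) hac hbd
        hab.ne had hbc.ne' hcd.ne (by rwa [hSM, ← hS]), hNM k (by rwa [← hS])]
    exact hsep _ _

lemma crossings_lt_of_resolve {M M' M'' : PM n} {a b c d : Fin (2 * n)}
    (hab : a < b) (hbc : b < c) (hcd : c < d) (hac : M.f a = c) (hbd : M.f b = d)
    (h'a : M'.f a = b) (h'c : M'.f c = d) (h''a : M''.f a = d) (h''b : M''.f b = c)
    (h' : ∀ k ∉ ({a, b, c, d} : Finset _), M'.f k = M.f k)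
    (h'' : ∀ k ∉ ({a, b, c, d} : Finset _), M''.f k = M.f k) :
    crossings M' < crossings M ∧ crossings M'' < crossings M := by
  have hac' : a < c := hab.trans hbc
  have hbd' : b < d := hbc.trans hcd
  have had : a < d := hab.trans hbd'
  have hsep x y := xorIndicator_add_le_of_ordConnected (Set.ordConnected_Ioo (a := x) (b := y))
    hab hbc hcd
  refine ⟨crossings_lt_of_rematch hab hbc hcd hac hbd hab hcd h'a h'c hac'.ne had.ne hbc.ne hbd'.ne
    rfl h' ?_ fun x y => (hsep x y).1, crossings_lt_of_rematch hab hbc hcd hac hbd had hbc h''a h''b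
    hab.ne hac'.ne hbd'.ne' hcd.ne' ?_ h'' ?_ fun x y => (hsep x y).2⟩
  · simp [xorIndicator, hac'.not_gt, hbc.not_gt]
  · ext; simp only [Finset.mem_insert, Finset.mem_singleton]; tauto
  · simp [xorIndicator, hab.not_gt, hcd.not_gt]

end PM

theorem uncrossing_syzygy (n : ℕ) (M : PM n) (a b c d : Fin (2 * n))
    (hab : a < b) (hbc : b < c) (hcd : c < d)
    (hac : M.f a = c) (hbd : M.f b = d) :
    ∃ M' M'' : PM n,
      (M'.f a = b ∧ M'.f c = d ∧ ∀ k, k ≠ a → k ≠ b → k ≠ c → k ≠ d → M'.f k = M.f k) ∧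
      (M''.f a = d ∧ M''.f b = c ∧ ∀ k, k ≠ a → k ≠ b → k ≠ c → k ≠ d → M''.f k = M.f k) ∧
      DeltaM M = DeltaM M' + DeltaM M'' ∧
      crossings M' < crossings M ∧ crossings M'' < crossings M := by
  obtain ⟨M', h'a, h'c, h'⟩ := M.exists_rematch hab.ne hcd.ne hac hbd
  obtain ⟨M'', h''a, h''c, h''⟩ :=
    M.exists_rematch (hab.trans (hbc.trans hcd)).ne hbc.ne' hac (M.apply_eq_comm.1 hbd)
  have h''b : M''.f b = c := M''.apply_eq_comm.1 h''c
  have h''' : ∀ k, k ≠ a → k ≠ b → k ≠ c → k ≠ d → M''.f k = M.f k :=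
    fun k ha hb hc hd => h'' k ha hd hc hb
  have hout : ∀ N : PM n, (∀ k, k ≠ a → k ≠ b → k ≠ c → k ≠ d → N.f k = M.f k) →
      ∀ k ∉ ({a, b, c, d} : Finset _), N.f k = M.f k := by
    intro N hN k hk
    simp only [Finset.mem_insert, Finset.mem_singleton, not_or] at hk
    exact hN k hk.1 hk.2.1 hk.2.2.1 hk.2.2.2
  exact ⟨M', M'', ⟨h'a, h'c, h'⟩, ⟨h''a, h''b, h'''⟩,
    PM.DeltaM_eq_add_of_resolve hab hbc hcd hac hbd h'a h'c h''a h''b (hout _ h') (hout _ h'''),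
    PM.crossings_lt_of_resolve hab hbc hcd hac hbd h'a h'c h''a h''b (hout _ h') (hout _ h''')⟩
end
end

section
/- The operators defined on the free ℂ-vector space W_n with basis indexed by noncrossing perfect matchings of {1,...,2n}, by s_i.w_M = -w_M if {i,i+1} is a block of M, and s_i.w_M = w_M + w_{M'} otherwise (where M' replaces the blocks {a,i},{b,i+1} containing i and i+1 by {a,b},{i,i+1}), satisfy the Coxeter relations of S_{2n}: s_i² = id, s_i s_j = s_j s_i for |i-j| ≥ 2, and s_i s_{i+1} s_i = s_{i+1} s_i s_{i+1}. -/
open MvPolynomial Finset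

noncomputable section

/-! Write `s_i = 1 + e_i`. On the basis, `e_i` sends `w_M` to `w_{M'}` when `{i, i+1}` is not a
block of `M`, and to `-2 • w_M` when it is. So the `e_i` act by monomial matrices, and the
Temperley–Lieb relations `e_i² = -2 e_i`, `e_i e_j = e_j e_i` for `|i - j| ≥ 2` and
`e_i e_{i±1} e_i = e_i` come down to identities between the operations `M ↦ M'` on perfect
matchings and to bookkeeping of the factors `-2`; the Coxeter relations for `1 + e_i` follow
formally. The combinatorial point is that `M'` is again noncrossing: a block separating the
partners of `i` and `i + 1` would cross the block through `i` or the one through `i + 1`, since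
nothing lies strictly between `i` and `i + 1`. -/

section CoxeterOfTemperleyLieb

variable {K A : Type*} [CommRing K] [Ring A] [Module K A]

theorem one_add_mul_self_eq_one {a : A} (ha : a * a = (-2 : K) • a) : (1 + a) * (1 + a) = 1 := by
  rw [add_mul, mul_add, mul_add, one_mul, mul_one, one_mul, ha]
  module

theorem one_add_mul_one_add_comm {a b : A} (h : a * b = b * a) :
    (1 + a) * (1 + b) = (1 + b) * (1 + a) := by
  simp only [add_mul, mul_add, one_mul, mul_one, h]
  abel

theorem one_add_braid {a b : A} (ha : a * a = (-2 : K) • a) (hb : b * b = (-2 : K) • b)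
    (haba : a * b * a = a) (hbab : b * a * b = b) :
    (1 + a) * (1 + b) * (1 + a) = (1 + b) * (1 + a) * (1 + b) := by
  have expand : ∀ x y : A,
      (1 + x) * (1 + y) * (1 + x) = 1 + x + x + y + x * x + x * y + y * x + x * y * x := by
    intro x y
    noncomm_ring
  rw [expand, expand, ha, hb, haba, hbab]
  module

end CoxeterOfTemperleyLieb

namespace Finsupp

variable {R X : Type*} [CommSemiring R]

def monomialEnd (u : X → X) (c : X → R) : Module.End R (X →₀ R) :=
  linearCombination R fun x => c x • single (u x) 1

@[simp] lemma monomialEnd_single (u : X → X) (c : X → R) (x : X) (r : R) :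
    monomialEnd u c (single x r) = single (u x) (r * c x) := by
  simp [monomialEnd]

lemma monomialEnd_mul (u v : X → X) (c d : X → R) :
    monomialEnd u c * monomialEnd v d = monomialEnd (u ∘ v) fun x => d x * c (v x) := by
  ext x : 2
  simp

lemma smul_monomialEnd (a : R) (u : X → X) (c : X → R) :
    a • monomialEnd u c = monomialEnd u fun x => a * c x := by
  ext x : 2
  simp [mul_left_comm]

end Finsupp

namespace PM

variable {n : ℕ}

lemma ext {M N : PM n} (h : M.f = N.f) : M = N := by
  cases M; cases N; cases h; rfl

lemma injective (M : PM n) : Function.Injective M.f :=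
  Function.Involutive.injective M.invol

/-- Conjugating by the transposition of `q` and `M.f p` replaces the blocks `{p, M.f p}` and
`{q, M.f q}` by `{p, q}` and `{M.f p, M.f q}`; when `M.f p = q` it leaves `M` unchanged. -/
def join (M : PM n) (p q : Fin (2 * n)) : PM n where
  f x := Equiv.swap q (M.f p) (M.f (Equiv.swap q (M.f p) x))
  invol x := by simp [M.invol]
  nofix x h := M.nofix (Equiv.swap q (M.f p) x) <| by
    simpa using congrArg (Equiv.swap q (M.f p)) h

lemma join_f_apply (M : PM n) (p q k : Fin (2 * n)) :
    (M.join p q).f k = Equiv.swap q (M.f p) (M.f (Equiv.swap q (M.f p) k)) := rfl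

lemma join_f_eq_iff (M : PM n) {p q : Fin (2 * n)} (hpq : p ≠ q) (k l : Fin (2 * n)) :
    (M.join p q).f k = l ↔ k = p ∧ l = q ∨ k = q ∧ l = p ∨ M.f k = p ∧ M.f l = q ∨
      M.f k = q ∧ M.f l = p ∨ M.f k = l ∧ k ≠ p ∧ k ≠ q ∧ l ≠ p ∧ l ≠ q := by
  have := M.invol
  have := M.nofix
  simp only [join, Equiv.swap_apply_def]
  grind

lemma join_f_left (M : PM n) {p q : Fin (2 * n)} (hpq : p ≠ q) : (M.join p q).f p = q := by
  simp [M.join_f_eq_iff hpq]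

lemma join_f_right (M : PM n) {p q : Fin (2 * n)} (hpq : p ≠ q) : (M.join p q).f q = p := by
  simp [M.join_f_eq_iff hpq]

lemma join_f_of_f_eq_left (M : PM n) {p q k : Fin (2 * n)} (hpq : p ≠ q) (hk : M.f k = p) :
    (M.join p q).f k = M.f q := by
  simp [M.join_f_eq_iff hpq, hk, M.invol]

lemma join_f_of_f_eq_right (M : PM n) {p q k : Fin (2 * n)} (hpq : p ≠ q) (hk : M.f k = q) :
    (M.join p q).f k = M.f p := by
  simp [M.join_f_eq_iff hpq, hk, M.invol]

lemma join_f_of_ne (M : PM n) {p q k : Fin (2 * n)} (hpq : p ≠ q) (hp : k ≠ p) (hq : k ≠ q)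
    (hp' : k ≠ M.f p) (hq' : k ≠ M.f q) : (M.join p q).f k = M.f k := by
  have := M.invol
  grind [M.join_f_eq_iff hpq]

lemma join_of_f_eq (M : PM n) {p q : Fin (2 * n)} (h : M.f p = q) : M.join p q = M := by
  have hpq : p ≠ q := fun e => M.nofix p (h.trans e.symm)
  refine PM.ext (funext fun k => ?_)
  have := M.invol
  grind [M.join_f_eq_iff hpq]

lemma join_join_of_f_eq_left (N : PM n) {p q r : Fin (2 * n)} (hpq : p ≠ q) (hqr : q ≠ r)
    (hpr : p ≠ r) (h : N.f p = q) : (N.join q r).join p q = N := by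
  refine PM.ext (funext fun k => ?_)
  rw [(N.join q r).join_f_eq_iff hpq]
  simp only [N.join_f_eq_iff hqr]
  have := N.invol
  have := N.nofix
  grind

lemma join_join_of_f_eq_right (N : PM n) {p q r : Fin (2 * n)} (hpq : p ≠ q) (hqr : q ≠ r)
    (hpr : p ≠ r) (h : N.f q = r) : (N.join p q).join q r = N := by
  refine PM.ext (funext fun k => ?_)
  rw [(N.join p q).join_f_eq_iff hqr]
  simp only [N.join_f_eq_iff hpq]
  have := N.invol
  have := N.nofix
  grind

lemma join_f_eq_iff_of_disjoint (M : PM n) {p q r s : Fin (2 * n)} (hrs : r ≠ s) (hpr : p ≠ r)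
    (hps : p ≠ s) (hqr : q ≠ r) (hqs : q ≠ s) :
    (M.join r s).f p = q ↔ M.f p = r ∧ M.f q = s ∨ M.f p = s ∧ M.f q = r ∨ M.f p = q := by
  simp [M.join_f_eq_iff hrs, *]

lemma join_comm (M : PM n) {p q r s : Fin (2 * n)} (hpq : p ≠ q) (hrs : r ≠ s) (hpr : p ≠ r)
    (hps : p ≠ s) (hqr : q ≠ r) (hqs : q ≠ s) :
    (M.join p q).join r s = (M.join r s).join p q := by
  have := M.invol
  have := M.nofix
  by_cases h : M.f p = q ∨ M.f r = s ∨ M.f p = r ∨ M.f p = s ∨ M.f q = r ∨ M.f q = s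
  · refine PM.ext (funext fun k => ?_)
    rcases h with h | h | h | h | h | h <;>
      grind [join_f_left, join_f_right, join_f_of_f_eq_left, join_f_of_f_eq_right, join_f_of_ne]
  -- Otherwise the four blocks through `p, q, r, s` are distinct, and both sides are `M`
  -- conjugated by the same two commuting transpositions.
  push Not at h
  obtain ⟨hpq', hrs', hpr', hps', hqr', hqs'⟩ := h
  have hcomm : ∀ x, Equiv.swap q (M.f p) (Equiv.swap s (M.f r) x) =
      Equiv.swap s (M.f r) (Equiv.swap q (M.f p) x) := by
    refine DFunLike.congr_fun (Equiv.Perm.Disjoint.commute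
      (Equiv.Perm.disjoint_swap_swap ?_)).eq
    simp only [List.nodup_cons, List.mem_cons, List.not_mem_nil]
    grind
  have hr : (M.join p q).f r = M.f r :=
    M.join_f_of_ne hpq hpr.symm hqr.symm (fun e => hpr' e.symm) (fun e => hqr' e.symm)
  have hp : (M.join r s).f p = M.f p := M.join_f_of_ne hrs hpr hps
    (fun e => hpr' (by rw [e, M.invol])) (fun e => hps' (by rw [e, M.invol]))
  refine PM.ext (funext fun k => ?_)
  rw [join_f_apply, join_f_apply (M.join r s), hr, hp]
  simp only [join_f_apply, hcomm]

end PM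

def Between {m : ℕ} (a b x : Fin m) : Prop := a < x ∧ x < b ∨ b < x ∧ x < a

section Noncrossing

variable {n : ℕ} {M : PM n}

theorem Noncrossing.between_iff (hM : Noncrossing M) {a x : Fin (2 * n)} (hxa : x ≠ a)
    (hxb : x ≠ M.f a) : Between a (M.f a) x ↔ Between a (M.f a) (M.f x) := by
  have crossing : ∀ a x, ¬(a < x ∧ x < M.f a ∧ (M.f x < a ∨ M.f a < M.f x)) := by
    rintro a x ⟨h₁, h₂, h₃ | h₃⟩
    · exact hM ⟨M.f x, a, x, M.f a, h₃, h₁, h₂, M.invol x, rfl⟩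
    · exact hM ⟨a, x, M.f a, M.f x, h₁, h₂, h₃, rfl, rfl⟩
  have h₁ := crossing a x
  have h₂ := crossing (M.f a) x
  have h₃ := crossing a (M.f x)
  have h₄ := crossing (M.f a) (M.f x)
  simp only [M.invol] at h₂ h₃ h₄
  have hya : M.f x ≠ a := fun e => hxb (by rw [← e, M.invol])
  have hyb : M.f x ≠ M.f a := M.injective.ne hxa
  unfold Between
  omega

theorem Noncrossing.between_iff_of_adjacent (hM : Noncrossing M) {x u v : Fin (2 * n)}
    (huv : (M.f v : ℕ) = M.f u + 1) (hux : u ≠ x) (hux' : u ≠ M.f x) (hvx : v ≠ x)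
    (hvx' : v ≠ M.f x) : Between x (M.f x) u ↔ Between x (M.f x) v := by
  have hu := hM.between_iff hux hux'
  have hv := hM.between_iff hvx hvx'
  have h₁ : x ≠ M.f u := fun e => hux' (by rw [e, M.invol])
  have h₂ : x ≠ M.f v := fun e => hvx' (by rw [e, M.invol])
  have h₃ : M.f x ≠ M.f u := M.injective.ne hux.symm
  have h₄ : M.f x ≠ M.f v := M.injective.ne hvx.symm
  unfold Between at *
  omega

theorem Noncrossing.join (hM : Noncrossing M) {p q : Fin (2 * n)} (hq : (q : ℕ) = p + 1) :
    Noncrossing (M.join p q) := by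
  have hpq : p ≠ q := Fin.ne_of_val_ne (by omega)
  rintro ⟨a, b, c, d, hab, hbc, hcd, hac, hbd⟩
  have had : a ≠ d := (hab.trans (hbc.trans hcd)).ne
  have hMab : M.f a ≠ M.f b := M.injective.ne hab.ne
  have hMad : M.f a ≠ M.f d := M.injective.ne had
  have hMcb : M.f c ≠ M.f b := M.injective.ne hbc.ne'
  have hMcd : M.f c ≠ M.f d := M.injective.ne hcd.ne
  rw [M.join_f_eq_iff hpq] at hac hbd
  rcases hac with ⟨rfl, rfl⟩ | ⟨rfl, rfl⟩ | ⟨ha, hc⟩ | ⟨ha, hc⟩ | ⟨hac, -⟩ <;>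
    rcases hbd with ⟨rfl, rfl⟩ | ⟨rfl, rfl⟩ | ⟨hb, hd⟩ | ⟨hb, hd⟩ | ⟨hbd, -⟩
  all_goals first | omega | skip
  -- Left: one crossing block is `{M.f p, M.f q}`, the other a block of `M`, which cannot
  -- separate `M.f p` from `M.f q`.
  · have := hM.between_iff_of_adjacent (x := b) (u := a) (v := c) (by omega) hab.ne
      (hbd ▸ had) hbc.ne' (hbd ▸ hcd.ne)
    unfold Between at this
    omega
  · have := hM.between_iff_of_adjacent (x := b) (u := c) (v := a) (by omega) hbc.ne'
      (hbd ▸ hcd.ne) hab.ne (hbd ▸ had)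
    unfold Between at this
    omega
  · have := hM.between_iff_of_adjacent (x := a) (u := b) (v := d) (by omega) hab.ne'
      (hac ▸ hbc.ne) had.symm (hac ▸ hcd.ne')
    unfold Between at this
    omega
  · have := hM.between_iff_of_adjacent (x := a) (u := d) (v := b) (by omega) had.symm
      (hac ▸ hcd.ne') hab.ne' (hac ▸ hbc.ne)
    unfold Between at this
    omega
  · exact hM ⟨a, b, c, d, hab, hbc, hcd, hac, hbd⟩

end Noncrossing

section TemperleyLieb

variable {n : ℕ}

def uncross (i : ℕ) (hi : i + 1 < 2 * n) (M : {M : PM n // Noncrossing M}) :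
    {M : PM n // Noncrossing M} :=
  ⟨M.1.join ⟨i, Nat.lt_of_succ_lt hi⟩ ⟨i + 1, hi⟩, M.2.join rfl⟩

/-- `-2` is the loop value: `e_i` closes a loop when `{i, i + 1}` already is a block. -/
def loopWeight (i : ℕ) (hi : i + 1 < 2 * n) (M : {M : PM n // Noncrossing M}) : ℂ :=
  if M.1.f ⟨i, Nat.lt_of_succ_lt hi⟩ = ⟨i + 1, hi⟩ then -2 else 1

def tlGen (i : ℕ) (hi : i + 1 < 2 * n) : Module.End ℂ ({M : PM n // Noncrossing M} →₀ ℂ) :=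
  Finsupp.monomialEnd (uncross i hi) (loopWeight i hi)

lemma fin_mk_ne_succ (i : ℕ) (hi : i + 1 < 2 * n) :
    (⟨i, Nat.lt_of_succ_lt hi⟩ : Fin (2 * n)) ≠ ⟨i + 1, hi⟩ :=
  Fin.ne_of_val_ne (Nat.lt_succ_self i).ne

lemma uncross_f_self (i : ℕ) (hi : i + 1 < 2 * n) (M : {M : PM n // Noncrossing M}) :
    (uncross i hi M).1.f ⟨i, Nat.lt_of_succ_lt hi⟩ = ⟨i + 1, hi⟩ :=
  M.1.join_f_left (fin_mk_ne_succ i hi)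

lemma uncross_of_f_eq {i : ℕ} {hi : i + 1 < 2 * n} {M : {M : PM n // Noncrossing M}}
    (h : M.1.f ⟨i, Nat.lt_of_succ_lt hi⟩ = ⟨i + 1, hi⟩) : uncross i hi M = M :=
  Subtype.ext (M.1.join_of_f_eq h)

lemma loopWeight_uncross (i : ℕ) (hi : i + 1 < 2 * n) (M : {M : PM n // Noncrossing M}) :
    loopWeight i hi (uncross i hi M) = -2 :=
  if_pos (uncross_f_self i hi M)

lemma loopWeight_succ_uncross (i : ℕ) (hi : i + 2 < 2 * n) (M : {M : PM n // Noncrossing M}) :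
    loopWeight (i + 1) hi (uncross i (by omega) M) = 1 := by
  refine if_neg fun h => ?_
  rw [uncross, PM.join_f_right _ (fin_mk_ne_succ i _)] at h
  exact absurd (congrArg Fin.val h) (show i ≠ i + 1 + 1 by omega)

lemma loopWeight_uncross_succ (i : ℕ) (hi : i + 2 < 2 * n) (M : {M : PM n // Noncrossing M}) :
    loopWeight i (by omega) (uncross (i + 1) hi M) = 1 := by
  refine if_neg fun h => ?_
  have := (uncross (i + 1) hi M).1.invol ⟨i, by omega⟩
  rw [h, uncross, PM.join_f_left _ (fin_mk_ne_succ (i + 1) hi)] at this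
  exact absurd (congrArg Fin.val this) (show i + 1 + 1 ≠ i by omega)

lemma tlGen_mul_self (i : ℕ) (hi : i + 1 < 2 * n) :
    tlGen i hi * tlGen i hi = (-2 : ℂ) • tlGen i hi := by
  rw [tlGen, Finsupp.monomialEnd_mul, Finsupp.smul_monomialEnd]
  congr 1
  · funext M
    exact uncross_of_f_eq (uncross_f_self i hi M)
  · funext M
    rw [loopWeight_uncross, mul_comm]

lemma tlGen_mul_comm {i j : ℕ} (hi : i + 1 < 2 * n) (hj : j + 1 < 2 * n) (hij : i + 2 ≤ j) :
    tlGen i hi * tlGen j hj = tlGen j hj * tlGen i hi := by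
  have h₁ : (⟨i, Nat.lt_of_succ_lt hi⟩ : Fin (2 * n)) ≠ ⟨j, Nat.lt_of_succ_lt hj⟩ :=
    Fin.ne_of_val_ne (show i ≠ j by omega)
  have h₂ : (⟨i, Nat.lt_of_succ_lt hi⟩ : Fin (2 * n)) ≠ ⟨j + 1, hj⟩ :=
    Fin.ne_of_val_ne (show i ≠ j + 1 by omega)
  have h₃ : (⟨i + 1, hi⟩ : Fin (2 * n)) ≠ ⟨j, Nat.lt_of_succ_lt hj⟩ :=
    Fin.ne_of_val_ne (show i + 1 ≠ j by omega)
  have h₄ : (⟨i + 1, hi⟩ : Fin (2 * n)) ≠ ⟨j + 1, hj⟩ :=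
    Fin.ne_of_val_ne (show i + 1 ≠ j + 1 by omega)
  simp only [tlGen, Finsupp.monomialEnd_mul]
  congr 1
  · funext M
    exact Subtype.ext (M.1.join_comm (fin_mk_ne_succ i hi) (fin_mk_ne_succ j hj) h₁ h₂ h₃ h₄).symm
  · funext M
    simp only [loopWeight, uncross,
      PM.join_f_eq_iff_of_disjoint _ (fin_mk_ne_succ j hj) h₁ h₂ h₃ h₄,
      PM.join_f_eq_iff_of_disjoint _ (fin_mk_ne_succ i hi) h₁.symm h₃.symm h₂.symm h₄.symm]
    have := M.1.invol
    split_ifs <;> grind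

lemma tlGen_mul_succ_mul (i : ℕ) (hi : i + 2 < 2 * n) :
    tlGen i (by omega) * tlGen (i + 1) hi * tlGen i (by omega) = tlGen i (by omega) := by
  simp only [tlGen, Finsupp.monomialEnd_mul]
  congr 1
  · funext M
    exact Subtype.ext <| PM.join_join_of_f_eq_left _ (fin_mk_ne_succ i _)
      (fin_mk_ne_succ (i + 1) hi) (Fin.ne_of_val_ne (show i ≠ i + 2 by omega))
      (uncross_f_self i _ M)
  · funext M
    simp [loopWeight_succ_uncross, loopWeight_uncross_succ]

lemma tlGen_succ_mul_mul (i : ℕ) (hi : i + 2 < 2 * n) :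
    tlGen (i + 1) hi * tlGen i (by omega) * tlGen (i + 1) hi = tlGen (i + 1) hi := by
  simp only [tlGen, Finsupp.monomialEnd_mul]
  congr 1
  · funext M
    exact Subtype.ext <| PM.join_join_of_f_eq_right _ (fin_mk_ne_succ i _)
      (fin_mk_ne_succ (i + 1) hi) (Fin.ne_of_val_ne (show i ≠ i + 2 by omega))
      (uncross_f_self (i + 1) hi M)
  · funext M
    simp [loopWeight_succ_uncross, loopWeight_uncross_succ]

lemma eq_one_add_tlGen {i : ℕ} (hi : i + 1 < 2 * n)
    (s : Module.End ℂ ({M : PM n // Noncrossing M} →₀ ℂ))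
    (h_block : ∀ M : {M : PM n // Noncrossing M}, M.1.f ⟨i, Nat.lt_of_succ_lt hi⟩ = ⟨i + 1, hi⟩ →
      s (Finsupp.single M 1) = -Finsupp.single M 1)
    (h_not_block : ∀ M : {M : PM n // Noncrossing M}, M.1.f ⟨i, Nat.lt_of_succ_lt hi⟩ ≠ ⟨i + 1, hi⟩ →
      s (Finsupp.single M 1) = Finsupp.single M 1 + Finsupp.single (uncross i hi M) 1) :
    s = 1 + tlGen i hi := by
  ext M : 2
  by_cases h : M.1.f ⟨i, Nat.lt_of_succ_lt hi⟩ = ⟨i + 1, hi⟩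
  · simp only [LinearMap.coe_comp, Function.comp_apply, Finsupp.lsingle_apply, h_block M h,
      LinearMap.add_apply, Module.End.one_apply, tlGen, Finsupp.monomialEnd_single,
      uncross_of_f_eq h, loopWeight, if_pos h, ← Finsupp.single_neg, ← Finsupp.single_add]
    norm_num
  · simp only [LinearMap.coe_comp, Function.comp_apply, Finsupp.lsingle_apply, h_not_block M h,
      LinearMap.add_apply, Module.End.one_apply, tlGen, Finsupp.monomialEnd_single, loopWeight,
      if_neg h, one_mul]

end TemperleyLieb

theorem web_operators_coxeter_relations (n : ℕ)
    (S : ℕ → (({M : PM n // Noncrossing M} →₀ ℂ) →ₗ[ℂ] ({M : PM n // Noncrossing M} →₀ ℂ)))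
    (hS : ∀ (i : ℕ) (hi : i + 1 < 2 * n) (M : {M : PM n // Noncrossing M}),
      (M.1.f ⟨i, Nat.lt_of_succ_lt hi⟩ = ⟨i + 1, hi⟩ →
        S i (Finsupp.single M 1) = - Finsupp.single M 1) ∧
      (M.1.f ⟨i, Nat.lt_of_succ_lt hi⟩ ≠ ⟨i + 1, hi⟩ →
        ∀ M' : {M : PM n // Noncrossing M},
          M'.1.f ⟨i, Nat.lt_of_succ_lt hi⟩ = ⟨i + 1, hi⟩ →
          M'.1.f (M.1.f ⟨i, Nat.lt_of_succ_lt hi⟩) = M.1.f ⟨i + 1, hi⟩ →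
          (∀ k, k ≠ ⟨i, Nat.lt_of_succ_lt hi⟩ → k ≠ ⟨i + 1, hi⟩ →
            k ≠ M.1.f ⟨i, Nat.lt_of_succ_lt hi⟩ → k ≠ M.1.f ⟨i + 1, hi⟩ →
            M'.1.f k = M.1.f k) →
          S i (Finsupp.single M 1) = Finsupp.single M 1 + Finsupp.single M' 1)) :
    (∀ i : ℕ, i + 1 < 2 * n → S i ∘ₗ S i = LinearMap.id) ∧
    (∀ i j : ℕ, i + 1 < 2 * n → j + 1 < 2 * n → i + 2 ≤ j → S i ∘ₗ S j = S j ∘ₗ S i) ∧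
    (∀ i : ℕ, i + 2 < 2 * n →
      S i ∘ₗ S (i + 1) ∘ₗ S i = S (i + 1) ∘ₗ S i ∘ₗ S (i + 1)) := by
  have hS' : ∀ i (hi : i + 1 < 2 * n), S i = 1 + tlGen i hi := by
    intro i hi
    refine eq_one_add_tlGen hi (S i) (fun M => (hS i hi M).1) fun M h => ?_
    exact (hS i hi M).2 h _ (uncross_f_self i hi M)
      (M.1.join_f_of_f_eq_left (fin_mk_ne_succ i hi) (M.1.invol _))
      fun _ => M.1.join_f_of_ne (fin_mk_ne_succ i hi)
  refine ⟨fun i hi => ?_, fun i j hi hj hij => ?_, fun i hi => ?_⟩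
  · rw [← Module.End.mul_eq_comp, hS' i hi, ← Module.End.one_eq_id]
    exact one_add_mul_self_eq_one (K := ℂ) (a := tlGen i hi) (tlGen_mul_self i hi)
  · rw [← Module.End.mul_eq_comp, ← Module.End.mul_eq_comp, hS' i hi, hS' j hj]
    exact one_add_mul_one_add_comm (a := tlGen i hi) (tlGen_mul_comm hi hj hij)
  · simp only [← Module.End.mul_eq_comp, ← mul_assoc, hS' i (by omega), hS' (i + 1) hi]
    exact one_add_braid (K := ℂ) (a := tlGen i _) (b := tlGen (i + 1) hi) (tlGen_mul_self _ _)
      (tlGen_mul_self _ _) (tlGen_mul_succ_mul i hi) (tlGen_succ_mul_mul i hi)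
end
end
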